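/- Let k ≥ 1, ℓ ∈ ℝ^k, μ_i > 0 and θ_i ≥ 0 for i = 1,…,k, x ∈ ℝ^k, and let w : [0,∞) → ℝ^k be continuous with w(0) = 0. Let X : [0,∞) → ℝ^k be continuous and Ψ : [0,∞) → ℝ^k be locally integrable with Ψ_i(t) ≤ X_i(t) for all i and t, and Σ_i Ψ_i(t) = min(0, Σ_i X_i(t)) for all t, and suppose X_i(t) = x_i + w_i(t) + ∫₀ᵗ [ −θ_i X_i(s) − (μ_i − θ_i) Ψ_i(s) + ℓ_i ] ds for all i and t. Let Υ be the unique continuous solution of Υ_i(t) = x_i + w_i(t) + ∫₀ᵗ (−μ_i Υ_i(s) + ℓ_i) ds. Then there is a constant c > 0, depending only on k, μ, θ and ℓ (not on x, w or t), such that ‖X(t)‖ ≤ c [ ‖x‖ + ‖w(t)‖ + t + ∫₀ᵗ ‖Υ(s)‖ ds + ‖Υ(t)‖ ] for all t ≥ 0. -/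

import Mathlib

open Set MeasureTheory

noncomputable def l1 {k : ℕ} (x : Fin k → ℝ) : ℝ := ∑ i, |x i|

/-!
Subtracting the two integral equations, `Z = X - Υ` solves `Z_i' = -μ_i Z_i + (μ_i - θ_i) P_i`
with `P_i = X_i - Ψ_i ≥ 0`, so by variation of constants `Z_i = (μ_i - θ_i) A_i`, where
`A_i(t) = ∫₀ᵗ e^{-μ_i (t - u)} P_i(u) du ≥ 0` solves `A_i' = P_i - μ_i A_i`. Work conservation gives
`Σ_i P_i = (Σ_i X_i)⁺`, and `Σ_i X_i ≤ ‖Υ‖ + Σ_i μ_i A_i` because `θ_i A_i ≥ 0`; hence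
`(Σ_i A_i)' ≤ ‖Υ‖`, and `‖X(t)‖ ≤ ‖Υ(t)‖ + ‖μ - θ‖ ∫₀ᵗ ‖Υ‖`.
-/
theorem exp_mul_integral_eq_integral {μ t : ℝ} {h : ℝ → ℝ}
    (hh : IntervalIntegrable h volume 0 t) :
    Real.exp (μ * t) * ∫ s in 0..t, h s
      = ∫ s in 0..t, Real.exp (μ * s) * (h s + μ * ∫ u in 0..s, h u) := by
  have hE : AbsolutelyContinuousOnInterval (fun s => Real.exp (μ * s)) 0 t :=
    ContDiffOn.absolutelyContinuousOnInterval (by fun_prop)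
  have hH := hh.absolutelyContinuousOnInterval_intervalIntegral left_mem_uIcc
  have hparts := hE.integral_deriv_mul_eq_sub hH
  simp only [mul_zero, Real.exp_zero, intervalIntegral.integral_same, sub_zero] at hparts
  rw [← hparts]
  refine intervalIntegral.integral_congr_ae ?_
  filter_upwards [hh.ae_hasDerivAt_integral] with s hs hst
  have hEs : deriv (fun s => Real.exp (μ * s)) s = μ * Real.exp (μ * s) := by
    simpa [mul_comm] using ((hasDerivAt_id s).const_mul μ).exp.deriv
  rw [hEs, (hs (uIoc_subset_uIcc hst) 0 left_mem_uIcc).deriv]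
  ring

noncomputable def dampedPrimitive (μ : ℝ) (g : ℝ → ℝ) (t : ℝ) : ℝ :=
  Real.exp (-(μ * t)) * ∫ u in 0..t, Real.exp (μ * u) * g u

theorem dampedPrimitive_eq_integral {μ t : ℝ} {g : ℝ → ℝ}
    (hg : IntervalIntegrable g volume 0 t) :
    dampedPrimitive μ g t = ∫ s in 0..t, (g s - μ * dampedPrimitive μ g s) := by
  have heg : IntervalIntegrable (fun u => Real.exp (μ * u) * g u) volume 0 t :=
    hg.continuousOn_mul (by fun_prop)
  rw [dampedPrimitive, ← neg_mul, exp_mul_integral_eq_integral heg]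
  refine intervalIntegral.integral_congr fun s _ => ?_
  have hs : Real.exp (-(μ * s)) * Real.exp (μ * s) = 1 := by rw [← Real.exp_add]; simp
  simp only [dampedPrimitive, neg_mul]
  linear_combination g s * hs

theorem eq_dampedPrimitive_of_eq_integral {μ t : ℝ} {g Z : ℝ → ℝ}
    (hg : IntervalIntegrable g volume 0 t) (hZ : IntervalIntegrable Z volume 0 t)
    (hZeq : ∀ s ∈ uIcc 0 t, Z s = ∫ u in 0..s, (g u - μ * Z u)) :
    Z t = dampedPrimitive μ g t := by
  have hmul := exp_mul_integral_eq_integral (μ := μ) (hg.sub (hZ.const_mul μ))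
  rw [← hZeq t right_mem_uIcc] at hmul
  have hcancel :
      ∫ s in 0..t, Real.exp (μ * s) * (g s - μ * Z s + μ * ∫ u in 0..s, (g u - μ * Z u))
        = ∫ s in 0..t, Real.exp (μ * s) * g s := by
    refine intervalIntegral.integral_congr fun s hs => ?_
    rw [← hZeq s hs]
    ring
  rw [hcancel] at hmul
  rw [dampedPrimitive, ← hmul, ← mul_assoc, ← Real.exp_add]
  simp

theorem dampedPrimitive_const_mul (μ a : ℝ) (g : ℝ → ℝ) (t : ℝ) :
    dampedPrimitive μ (fun s => a * g s) t = a * dampedPrimitive μ g t := by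
  simp only [dampedPrimitive, mul_left_comm _ a, intervalIntegral.integral_const_mul]

theorem dampedPrimitive_nonneg {μ t : ℝ} {g : ℝ → ℝ} (ht : 0 ≤ t)
    (hg : ∀ s ∈ Icc 0 t, 0 ≤ g s) : 0 ≤ dampedPrimitive μ g t :=
  mul_nonneg (Real.exp_nonneg _) <| intervalIntegral.integral_nonneg ht fun s hs =>
    mul_nonneg (Real.exp_nonneg _) (hg s hs)

theorem intervalIntegrable_dampedPrimitive {μ t : ℝ} {g : ℝ → ℝ}
    (hg : IntervalIntegrable g volume 0 t) :
    IntervalIntegrable (dampedPrimitive μ g) volume 0 t := by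
  have hprim := intervalIntegral.continuousOn_primitive_interval'
    (hg.continuousOn_mul (Real.continuous_exp.comp (continuous_const_mul μ)).continuousOn)
    left_mem_uIcc
  exact ((Real.continuous_exp.comp (continuous_const_mul μ).neg).continuousOn.mul
    hprim).intervalIntegrable

theorem sub_eq_mul_dampedPrimitive {μ θ ℓ t : ℝ} {b X Ψ Υ : ℝ → ℝ} (ht : 0 ≤ t)
    (hX : IntervalIntegrable X volume 0 t) (hΨ : IntervalIntegrable Ψ volume 0 t)
    (hΥ : IntervalIntegrable Υ volume 0 t)
    (hXeq : ∀ s ∈ Icc 0 t, X s = b s + ∫ u in 0..s, (-θ * X u - (μ - θ) * Ψ u + ℓ))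
    (hΥeq : ∀ s ∈ Icc 0 t, Υ s = b s + ∫ u in 0..s, (-μ * Υ u + ℓ)) :
    X t - Υ t = (μ - θ) * dampedPrimitive μ (fun s => X s - Ψ s) t := by
  rw [← dampedPrimitive_const_mul]
  refine eq_dampedPrimitive_of_eq_integral ((hX.sub hΨ).const_mul _) (hX.sub hΥ) ?_
  intro s hs
  rw [uIcc_of_le ht] at hs
  have hsub : uIcc 0 s ⊆ uIcc 0 t := uIcc_subset_uIcc_left (by rwa [uIcc_of_le ht])
  have hXs := (hX.mono_set hsub).const_mul (-θ)
  have hΨs := (hΨ.mono_set hsub).const_mul (μ - θ)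
  have hΥs := (hΥ.mono_set hsub).const_mul (-μ)
  rw [hXeq s hs, hΥeq s hs, add_sub_add_left_eq_sub,
    ← intervalIntegral.integral_sub ((hXs.sub hΨs).add intervalIntegrable_const)
      (hΥs.add intervalIntegrable_const)]
  refine intervalIntegral.integral_congr fun u _ => ?_
  ring

theorem l1_nonneg {k : ℕ} (x : Fin k → ℝ) : 0 ≤ l1 x :=
  Finset.sum_nonneg fun i _ => abs_nonneg (x i)

theorem l1_le_l1_add_mul_sum {k : ℕ} {X Υ A a : Fin k → ℝ} (hA : ∀ i, 0 ≤ A i)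
    (hX : ∀ i, X i = Υ i + a i * A i) : l1 X ≤ l1 Υ + l1 a * ∑ i, A i := by
  have hcoord : ∀ i, |X i| ≤ |Υ i| + l1 a * A i := fun i =>
    calc |X i| ≤ |Υ i| + |a i| * A i := by
          rw [hX i, ← abs_of_nonneg (hA i), ← abs_mul, abs_of_nonneg (hA i)]
          exact abs_add_le _ _
      _ ≤ |Υ i| + l1 a * A i := by
          gcongr
          · exact hA i
          · exact Finset.single_le_sum (fun j _ => abs_nonneg (a j)) (Finset.mem_univ i)
  calc l1 X ≤ ∑ i, (|Υ i| + l1 a * A i) := Finset.sum_le_sum fun i _ => hcoord i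
    _ = l1 Υ + l1 a * ∑ i, A i := by rw [Finset.sum_add_distrib, ← Finset.mul_sum]; rfl

theorem sum_sub_sub_mul_le_l1 {k : ℕ} {X Ψ Υ A μ θ : Fin k → ℝ} (hμ : ∀ i, 0 ≤ μ i)
    (hθ : ∀ i, 0 ≤ θ i) (hA : ∀ i, 0 ≤ A i) (hΨ : ∑ i, Ψ i = min 0 (∑ i, X i))
    (hX : ∀ i, X i = Υ i + (μ i - θ i) * A i) :
    ∑ i, (X i - Ψ i - μ i * A i) ≤ l1 Υ := by
  have hμA : 0 ≤ ∑ i, μ i * A i := Finset.sum_nonneg fun i _ => mul_nonneg (hμ i) (hA i)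
  have hXsum : ∑ i, X i ≤ l1 Υ + ∑ i, μ i * A i := by
    rw [l1, ← Finset.sum_add_distrib]
    refine Finset.sum_le_sum fun i _ => ?_
    rw [hX i]
    nlinarith [le_abs_self (Υ i), hθ i, hA i]
  rw [Finset.sum_sub_distrib, Finset.sum_sub_distrib, hΨ]
  rcases le_total 0 (∑ i, X i) with h | h
  · rw [min_eq_left h]; linarith
  · rw [min_eq_right h]; linarith [l1_nonneg Υ]

theorem sum_dampedPrimitive_le_integral_l1 {k : ℕ} {μ θ : Fin k → ℝ} {t : ℝ}
    {X Ψ Υ : ℝ → Fin k → ℝ} (ht : 0 ≤ t) (hμ : ∀ i, 0 ≤ μ i) (hθ : ∀ i, 0 ≤ θ i)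
    (hP : ∀ i, IntervalIntegrable (fun s => X s i - Ψ s i) volume 0 t)
    (hΥ : IntervalIntegrable (fun s => l1 (Υ s)) volume 0 t)
    (hΨle : ∀ s ∈ Icc 0 t, ∀ i, Ψ s i ≤ X s i)
    (hΨsum : ∀ s ∈ Icc 0 t, ∑ i, Ψ s i = min 0 (∑ i, X s i))
    (hX : ∀ s ∈ Icc 0 t, ∀ i,
      X s i = Υ s i + (μ i - θ i) * dampedPrimitive (μ i) (fun u => X u i - Ψ u i) s) :
    ∑ i, dampedPrimitive (μ i) (fun s => X s i - Ψ s i) t ≤ ∫ s in 0..t, l1 (Υ s) := by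
  have hterm : ∀ i ∈ Finset.univ, IntervalIntegrable (fun s => X s i - Ψ s i
      - μ i * dampedPrimitive (μ i) (fun u => X u i - Ψ u i) s) volume 0 t :=
    fun i _ => (hP i).sub ((intervalIntegrable_dampedPrimitive (hP i)).const_mul (μ i))
  have hsum : IntervalIntegrable (fun s => ∑ i, (X s i - Ψ s i
      - μ i * dampedPrimitive (μ i) (fun u => X u i - Ψ u i) s)) volume 0 t := by
    simpa only [Finset.sum_fn] using IntervalIntegrable.sum _ hterm
  simp_rw [dampedPrimitive_eq_integral (hP _)]
  rw [← intervalIntegral.integral_finsetSum hterm]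
  refine intervalIntegral.integral_mono_on ht hsum hΥ fun s hs =>
    sum_sub_sub_mul_le_l1 hμ hθ (fun i => ?_) (hΨsum s hs) (hX s hs)
  exact dampedPrimitive_nonneg hs.1 fun u hu =>
    sub_nonneg.2 (hΨle u ⟨hu.1, hu.2.trans hs.2⟩ i)

theorem stmt_16_general {k : ℕ} (ℓ μ θ : Fin k → ℝ)
    (hμ : ∀ i, 0 < μ i) (hθ : ∀ i, 0 ≤ θ i) :
    ∃ c > (0:ℝ),
      ∀ (x : Fin k → ℝ) (w : ℝ → Fin k → ℝ), ContinuousOn w (Ici 0) → w 0 = 0 →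
      ∀ (X Ψ : ℝ → Fin k → ℝ), ContinuousOn X (Ici 0) →
        (∀ i, ∀ t : ℝ, IntervalIntegrable (fun s => Ψ s i) volume 0 t) →
        (∀ t ≥ (0:ℝ), ∀ i, Ψ t i ≤ X t i) →
        (∀ t ≥ (0:ℝ), ∑ i, Ψ t i = min 0 (∑ i, X t i)) →
        (∀ t ≥ (0:ℝ), ∀ i, X t i = x i + w t i +
          ∫ s in (0:ℝ)..t, (-θ i * X s i - (μ i - θ i) * Ψ s i + ℓ i)) →
      ∀ (Υ : ℝ → Fin k → ℝ), ContinuousOn Υ (Ici 0) →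
        (∀ t ≥ (0:ℝ), ∀ i, Υ t i = x i + w t i +
          ∫ s in (0:ℝ)..t, (-μ i * Υ s i + ℓ i)) →
      ∀ t ≥ (0:ℝ),
        l1 (X t) ≤ c * (l1 x + l1 (w t) + t +
          (∫ s in (0:ℝ)..t, l1 (Υ s)) + l1 (Υ t)) := by
  refine ⟨1 + l1 (μ - θ), by linarith [l1_nonneg (μ - θ)], ?_⟩
  intro x w _ _ X Ψ hXc hΨ hΨle hΨsum hXeq Υ hΥc hΥeq t ht
  have hintegrable : ∀ {f : ℝ → ℝ}, ContinuousOn f (Ici 0) → ∀ r ≥ (0:ℝ),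
      IntervalIntegrable f volume 0 r := fun hf r hr =>
    (hf.mono (by rw [uIcc_of_le hr]; exact Icc_subset_Ici_self)).intervalIntegrable
  have hXi : ∀ i, ∀ r ≥ (0:ℝ), IntervalIntegrable (fun s => X s i) volume 0 r :=
    fun i => hintegrable ((continuous_apply i).comp_continuousOn hXc)
  have hΥi : ∀ i, ∀ r ≥ (0:ℝ), IntervalIntegrable (fun s => Υ s i) volume 0 r :=
    fun i => hintegrable ((continuous_apply i).comp_continuousOn hΥc)
  have hsplit : ∀ s ∈ Icc 0 t, ∀ i, X s i = Υ s i + (μ i - θ i) *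
      dampedPrimitive (μ i) (fun u => X u i - Ψ u i) s := fun s hs i => by
    rw [← sub_eq_mul_dampedPrimitive hs.1 (hXi i s hs.1) (hΨ i s) (hΥi i s hs.1)
      (fun r hr => hXeq r hr.1 i) (fun r hr => hΥeq r hr.1 i)]
    ring
  have hsum := sum_dampedPrimitive_le_integral_l1 ht (fun i => (hμ i).le) hθ
    (fun i => (hXi i t ht).sub (hΨ i t)) (hintegrable ((continuous_finsetSum _ fun i _ =>
      (continuous_apply i).abs).comp_continuousOn hΥc) t ht)
    (fun s hs => hΨle s hs.1) (fun s hs => hΨsum s hs.1) hsplit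
  have hl1X := l1_le_l1_add_mul_sum (a := μ - θ)
    (fun i => dampedPrimitive_nonneg ht fun s hs => sub_nonneg.2 (hΨle s hs.1 i))
    (hsplit t ⟨ht, le_rfl⟩)
  have hI : 0 ≤ ∫ s in (0:ℝ)..t, l1 (Υ s) :=
    intervalIntegral.integral_nonneg ht fun s _ => l1_nonneg _
  have hL := l1_nonneg (μ - θ)
  calc l1 (X t) ≤ l1 (Υ t) + l1 (μ - θ) * ∫ s in (0:ℝ)..t, l1 (Υ s) := by
        refine hl1X.trans ?_
        gcongr
    _ ≤ _ := by nlinarith [l1_nonneg x, l1_nonneg (w t), l1_nonneg (Υ t)]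

theorem stmt_16 {k : ℕ} (hk : 1 ≤ k) (ℓ μ θ : Fin k → ℝ)
    (hμ : ∀ i, 0 < μ i) (hθ : ∀ i, 0 ≤ θ i) :
    ∃ c > (0:ℝ),
      ∀ (x : Fin k → ℝ) (w : ℝ → Fin k → ℝ), ContinuousOn w (Ici 0) → w 0 = 0 →
      ∀ (X Ψ : ℝ → Fin k → ℝ), ContinuousOn X (Ici 0) →
        (∀ i, ∀ t : ℝ, IntervalIntegrable (fun s => Ψ s i) volume 0 t) →
        (∀ t ≥ (0:ℝ), ∀ i, Ψ t i ≤ X t i) →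
        (∀ t ≥ (0:ℝ), ∑ i, Ψ t i = min 0 (∑ i, X t i)) →
        (∀ t ≥ (0:ℝ), ∀ i, X t i = x i + w t i +
          ∫ s in (0:ℝ)..t, (-θ i * X s i - (μ i - θ i) * Ψ s i + ℓ i)) →
      ∀ (Υ : ℝ → Fin k → ℝ), ContinuousOn Υ (Ici 0) →
        (∀ t ≥ (0:ℝ), ∀ i, Υ t i = x i + w t i +
          ∫ s in (0:ℝ)..t, (-μ i * Υ s i + ℓ i)) →
      ∀ t ≥ (0:ℝ),
        l1 (X t) ≤ c * (l1 x + l1 (w t) + t +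
          (∫ s in (0:ℝ)..t, l1 (Υ s)) + l1 (Υ t)) :=
  stmt_16_general ℓ μ θ hμ hθ
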